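/- arXiv:2403.03810 — 3 statements merged into one kernel-verified Lean document; each statement's English description precedes it below -/
import Mathlib

section
/- Let a ≥ 1 and u ≥ a. Then the upper incomplete Gamma function satisfies Γ(a, u) ≤ a · u^{a-1} · e^{-u}. -/
open MeasureTheory

/-- For a ≥ 1 and u ≥ a, the upper incomplete Gamma function
Γ(a,u) = ∫_u^∞ t^{a-1} e^{-t} dt satisfies Γ(a, u) ≤ a · u^{a-1} · e^{-u}. -/
theorem incomplete_gamma_bound (a u : ℝ) (ha : 1 ≤ a) (hu : a ≤ u) :
    (∫ t in Set.Ioi u, t ^ (a - 1) * Real.exp (-t)) ≤ a * u ^ (a - 1) * Real.exp (-u) := by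
  have hu0 : 0 < u := lt_of_lt_of_le one_pos (ha.trans hu)
  set c : ℝ := 1 - (a - 1) / u with hc_def
  clear_value c
  have hd : (a - 1) / u < 1 := (div_lt_one hu0).mpr (by linarith)
  have hc : 0 < c := by simp only [hc_def]; linarith
  set g : ℝ → ℝ := fun t => (u ^ (a - 1) * Real.exp (-u)) * Real.exp (-(c * (t - u))) with hg_def
  have key : ∀ t ∈ Set.Ioi u, t ^ (a - 1) * Real.exp (-t) ≤ g t := by
    intro t ht
    have ht0 : 0 < t := hu0.trans ht
    have hlog : Real.log t ≤ Real.log u + (t - u) / u := by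
      have h := Real.log_le_sub_one_of_pos (div_pos ht0 hu0)
      rw [Real.log_div ht0.ne' hu0.ne'] at h
      have h2 : t / u - 1 = (t - u) / u := by field_simp
      linarith [h2 ▸ h]
    simp only [hg_def]
    rw [Real.rpow_def_of_pos ht0, Real.rpow_def_of_pos hu0]
    rw [← Real.exp_add, mul_assoc, ← Real.exp_add, ← Real.exp_add, Real.exp_le_exp]
    have e1 : (a - 1) * Real.log t ≤ (a - 1) * (Real.log u + (t - u) / u) :=
      mul_le_mul_of_nonneg_left hlog (by linarith)
    have e2 : (a - 1) * ((t - u) / u) = ((a - 1) / u) * (t - u) := by ring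
    have e3 : c * (t - u) = (t - u) - ((a - 1) / u) * (t - u) := by rw [hc_def]; ring
    nlinarith [e1, e2, e3]
  have hg_int : IntegrableOn g (Set.Ioi u) := by
    have : IntegrableOn (fun t : ℝ => Real.exp (-(c * t))) (Set.Ioi u) := by
      simpa [neg_mul] using exp_neg_integrableOn_Ioi u hc
    have h2 : g = fun t => (u ^ (a - 1) * Real.exp (-u) * Real.exp (c * u)) *
        Real.exp (-(c * t)) := by
      funext t
      simp only [hg_def, mul_assoc]
      rw [← Real.exp_add, ← Real.exp_add, ← Real.exp_add]
      exact congrArg _ (congrArg Real.exp (by ring))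
    rw [h2]
    exact this.const_mul _
  have hf_int : IntegrableOn (fun t => t ^ (a - 1) * Real.exp (-t)) (Set.Ioi u) := by
    apply Integrable.mono' hg_int
    · exact (((continuous_id.rpow_const (fun x => Or.inr (by linarith))).mul
        (Real.continuous_exp.comp continuous_neg)).measurable).aestronglyMeasurable
    · filter_upwards [ae_restrict_mem measurableSet_Ioi] with t ht
      rw [Real.norm_eq_abs, abs_of_nonneg (mul_nonneg (Real.rpow_nonneg (hu0.trans ht).le _)
        (Real.exp_pos _).le)]
      exact key t ht
  have hmono := setIntegral_mono_on hf_int hg_int measurableSet_Ioi key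
  have hval : ∫ t in Set.Ioi u, g t = u ^ (a - 1) * Real.exp (-u) * c⁻¹ := by
    have h2 : ∀ t : ℝ, g t = (u ^ (a - 1) * Real.exp (-u) * Real.exp (c * u)) *
        Real.exp (-(c * t)) := by
      intro t
      simp only [hg_def, mul_assoc]
      rw [← Real.exp_add, ← Real.exp_add, ← Real.exp_add]
      exact congrArg _ (congrArg Real.exp (by ring))
    simp only [h2]
    rw [MeasureTheory.integral_const_mul]
    have h3 : (∫ t in Set.Ioi u, Real.exp (-(c * t))) = c⁻¹ * Real.exp (-(c * u)) := by
      have := integral_comp_mul_left_Ioi (fun x => Real.exp (-x)) u hc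
      simp only [smul_eq_mul, abs_of_pos (inv_pos.mpr hc)] at this
      rw [this, integral_exp_neg_Ioi]
    rw [h3]
    have h4 : Real.exp (c * u) * Real.exp (-(c * u)) = 1 := by
      rw [← Real.exp_add]; simp
    linear_combination (u ^ (a - 1) * Real.exp (-u) * c⁻¹) * h4
  rw [hval] at hmono
  refine hmono.trans ?_
  have h4 : a * (a - 1) / u ≤ a - 1 := (div_le_iff₀ hu0).mpr (by nlinarith)
  have h1ac : 1 ≤ a * c := by
    rw [hc_def]
    have : a * (1 - (a - 1) / u) = a - a * (a - 1) / u := by ring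
    linarith [this]
  have hca : c⁻¹ ≤ a := by
    rw [← one_div]
    exact (div_le_iff₀ hc).mpr h1ac
  have hK : 0 ≤ u ^ (a - 1) * Real.exp (-u) :=
    mul_nonneg (Real.rpow_nonneg hu0.le _) (Real.exp_pos _).le
  calc u ^ (a - 1) * Real.exp (-u) * c⁻¹ ≤ u ^ (a - 1) * Real.exp (-u) * a :=
        mul_le_mul_of_nonneg_left hca hK
    _ = a * u ^ (a - 1) * Real.exp (-u) := by ring
end

section
/- Let 0 < α ≤ 1, r > 0, and p ≥ (2^α/(2rα))^{1/α}. Define Φ(p) = (2 Σ_{m=0}^∞ exp(−2r(pm + p/2)^α))^{1/2}. Then Φ(p) ≤ exp(−r(p/2)^α) · (2 + 2^α/(2α² r p^α))^{1/2} ≤ exp(−r(p/2)^α) · (2 + 1/α)^{1/2}. -/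
/-!
With `β = 2r(p/2)^α` the series is `∑ₘ exp(-β(2m+1)^α)`, and the hypothesis on `p` says exactly
`αβ ≥ 1`. For `0 < α ≤ 1` and `αβ ≥ 1` the function
`t ↦ exp(-β t^α) t^(1-α) + α²β exp(-β u^α) t` has derivative
`exp(-β t^α)((1-α)t^(-α) - αβ) + α²β exp(-β u^α) ≤ 0` on `[1, u]`, so each term
`exp(-β(2m+3)^α)` is bounded by a telescoping difference, giving
`∑ₘ exp(-β(2m+1)^α) ≤ exp(-β)(1 + 1/(2α²β))`. Since `exp(-β) = exp(-r(p/2)^α)²` and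
`2^α/(2α²rp^α) = 1/(α²β) ≤ 1/α`, both inequalities follow.
-/

open Real Set

section SubexpTail

variable {α β : ℝ}

lemma hasDerivAt_exp_neg_mul_rpow_mul_rpow {t : ℝ} (ht : 0 < t) :
    HasDerivAt (fun x : ℝ => exp (-β * x ^ α) * x ^ (1 - α))
      (exp (-β * t ^ α) * ((1 - α) * t ^ (-α) - α * β)) t := by
  have hexp : HasDerivAt (fun x : ℝ => exp (-β * x ^ α))
      (exp (-β * t ^ α) * (-β * (α * t ^ (α - 1)))) t :=
    ((hasDerivAt_rpow_const (Or.inl ht.ne')).const_mul (-β)).exp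
  refine (hexp.mul (hasDerivAt_rpow_const (p := 1 - α) (Or.inl ht.ne'))).congr_deriv ?_
  have hcancel : t ^ (α - 1) * t ^ (1 - α) = 1 := by
    rw [← rpow_add ht]; norm_num
  rw [show 1 - α - 1 = -α by ring]
  linear_combination -exp (-β * t ^ α) * α * β * hcancel

lemma one_sub_mul_rpow_neg_sub_le (hα0 : 0 ≤ α) (hα1 : α ≤ 1) (hαβ : 1 ≤ α * β) {t : ℝ}
    (ht : 1 ≤ t) : (1 - α) * t ^ (-α) - α * β ≤ -(α ^ 2 * β) := by
  have : t ^ (-α) ≤ 1 := rpow_le_one_of_one_le_of_nonpos ht (by linarith)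
  nlinarith [rpow_nonneg (zero_le_one.trans ht) (-α)]

lemma antitoneOn_exp_neg_mul_rpow_mul_rpow_add (hα0 : 0 ≤ α) (hα1 : α ≤ 1)
    (hαβ : 1 ≤ α * β) (u : ℝ) :
    AntitoneOn (fun t : ℝ => exp (-β * t ^ α) * t ^ (1 - α) + α ^ 2 * β * exp (-β * u ^ α) * t)
      (Icc 1 u) := by
  set c := α ^ 2 * β * exp (-β * u ^ α)
  have hderiv (t : ℝ) (ht : 0 < t) :
      HasDerivAt (fun t : ℝ => exp (-β * t ^ α) * t ^ (1 - α) + c * t)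
        (exp (-β * t ^ α) * ((1 - α) * t ^ (-α) - α * β) + c) t :=
    ((hasDerivAt_exp_neg_mul_rpow_mul_rpow ht).add
      ((hasDerivAt_id' t).const_mul c)).congr_deriv (by ring)
  refine antitoneOn_of_hasDerivWithinAt_nonpos (convex_Icc 1 u)
    (f' := fun t => exp (-β * t ^ α) * ((1 - α) * t ^ (-α) - α * β) + c) ?_ ?_ ?_
  · intro t ht
    exact (hderiv t (by linarith [ht.1])).continuousAt.continuousWithinAt
  all_goals rw [interior_Icc]; rintro t ⟨h1t, htu⟩
  · exact (hderiv t (by linarith)).hasDerivWithinAt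
  · have hβ : 0 ≤ β := by nlinarith
    have hexp : exp (-β * u ^ α) ≤ exp (-β * t ^ α) :=
      exp_le_exp.2 (by nlinarith [rpow_le_rpow (by linarith) htu.le hα0])
    nlinarith [mul_le_mul_of_nonneg_left (one_sub_mul_rpow_neg_sub_le hα0 hα1 hαβ h1t.le)
      (exp_pos (-β * t ^ α)).le, mul_le_mul_of_nonneg_left hexp (by positivity : 0 ≤ α ^ 2 * β)]

lemma mul_exp_neg_mul_rpow_le_sub (hα0 : 0 ≤ α) (hα1 : α ≤ 1) (hαβ : 1 ≤ α * β) {s u : ℝ}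
    (hs : 1 ≤ s) (hsu : s ≤ u) :
    α ^ 2 * β * (u - s) * exp (-β * u ^ α) ≤
      exp (-β * s ^ α) * s ^ (1 - α) - exp (-β * u ^ α) * u ^ (1 - α) := by
  have := antitoneOn_exp_neg_mul_rpow_mul_rpow_add hα0 hα1 hαβ u ⟨hs, hsu⟩
    ⟨hs.trans hsu, le_rfl⟩ hsu
  simp only at this
  linarith

lemma summable_and_tsum_le_of_le_sub_succ {f B : ℕ → ℝ} (hf : ∀ n, 0 ≤ f n) (hB : ∀ n, 0 ≤ B n)
    (h : ∀ n, f n ≤ B n - B (n + 1)) : Summable f ∧ ∑' n, f n ≤ B 0 := by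
  have hpartial (n : ℕ) : ∑ i ∈ Finset.range n, f i ≤ B 0 :=
    calc ∑ i ∈ Finset.range n, f i ≤ ∑ i ∈ Finset.range n, (B i - B (i + 1)) :=
          Finset.sum_le_sum fun i _ => h i
      _ = B 0 - B n := Finset.sum_range_sub' B n
      _ ≤ B 0 := sub_le_self _ (hB n)
  exact ⟨summable_of_sum_range_le hf hpartial, Real.tsum_le_of_sum_range_le hf hpartial⟩

lemma tsum_exp_neg_mul_two_mul_add_one_rpow_le (hα0 : 0 ≤ α) (hα1 : α ≤ 1) (hαβ : 1 ≤ α * β) :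
    ∑' m : ℕ, exp (-β * (2 * m + 1) ^ α) ≤ exp (-β) * (1 + 1 / (2 * α ^ 2 * β)) := by
  have hc : 0 < 2 * α ^ 2 * β := by
    have hα : 0 < α := lt_of_le_of_ne hα0 (by rintro rfl; simp at hαβ; linarith)
    have hβ : 0 < β := by nlinarith
    positivity
  set f : ℕ → ℝ := fun m => exp (-β * (2 * m + 1) ^ α)
  set B : ℕ → ℝ := fun m => exp (-β * (2 * m + 1) ^ α) * (2 * m + 1) ^ (1 - α) / (2 * α ^ 2 * β)
  have hstep (m : ℕ) : f (m + 1) ≤ B m - B (m + 1) := by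
    have := mul_exp_neg_mul_rpow_le_sub hα0 hα1 hαβ (s := 2 * m + 1) (u := 2 * m + 3)
      (by linarith [m.cast_nonneg (α := ℝ)]) (by linarith)
    simp only [f, B, ← sub_div, le_div_iff₀ hc]
    rw [Nat.cast_succ, show 2 * ((m : ℝ) + 1) + 1 = 2 * m + 3 by ring]
    linarith
  obtain ⟨hsum_succ, htail⟩ := summable_and_tsum_le_of_le_sub_succ (fun m => (exp_pos _).le)
    (fun m => by positivity) hstep
  have hsum : Summable f := (summable_nat_add_iff 1).mp hsum_succ
  have hB0 : B 0 = exp (-β) / (2 * α ^ 2 * β) := by simp [B]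
  have hf0 : f 0 = exp (-β) := by simp [f]
  rw [hsum.tsum_eq_zero_add, hf0, mul_add, mul_one, mul_one_div, ← hB0]
  exact add_le_add_right htail _

end SubexpTail

lemma one_le_mul_two_mul_div_two_rpow {α r p : ℝ} (hα0 : 0 < α) (hr : 0 < r)
    (hp : ((2 : ℝ) ^ α / (2 * r * α)) ^ (1 / α) ≤ p) : 1 ≤ α * (2 * r * (p / 2) ^ α) := by
  have hp0 : 0 ≤ p := (rpow_nonneg (by positivity) _).trans hp
  rw [one_div, rpow_inv_le_iff_of_pos (by positivity) hp0 hα0,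
    div_le_iff₀ (by positivity)] at hp
  rw [div_rpow hp0 zero_le_two]
  field_simp
  linarith

/-- For 0 < α ≤ 1, r > 0 and p ≥ (2^α/(2rα))^{1/α}, the quantity
Φ(p) = (2 Σ_{m=0}^∞ exp(−2r(pm + p/2)^α))^{1/2} satisfies
Φ(p) ≤ exp(−r(p/2)^α)·(2 + 2^α/(2α²rp^α))^{1/2} ≤ exp(−r(p/2)^α)·(2 + 1/α)^{1/2}. -/
theorem phi_subexp_weight_bound (α r p : ℝ) (hα0 : 0 < α) (hα1 : α ≤ 1) (hr : 0 < r)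
    (hp : ((2:ℝ) ^ α / (2*r*α)) ^ (1/α) ≤ p) :
    Real.sqrt (2 * ∑' m : ℕ, Real.exp (-(2*r) * (p*(m:ℝ) + p/2) ^ α)) ≤
        Real.exp (-r * (p/2) ^ α) * Real.sqrt (2 + (2:ℝ) ^ α / (2*α^2*r*p^α)) ∧
      Real.exp (-r * (p/2) ^ α) * Real.sqrt (2 + (2:ℝ) ^ α / (2*α^2*r*p^α)) ≤
        Real.exp (-r * (p/2) ^ α) * Real.sqrt (2 + 1/α) := by
  have hp0 : 0 ≤ p := (rpow_nonneg (by positivity) _).trans hp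
  set β := 2 * r * (p / 2) ^ α with hβ
  have hαβ : 1 ≤ α * β := one_le_mul_two_mul_div_two_rpow hα0 hr hp
  have hterm (m : ℕ) : exp (-(2 * r) * (p * m + p / 2) ^ α) = exp (-β * (2 * m + 1) ^ α) := by
    rw [show p * m + p / 2 = p / 2 * (2 * m + 1) by ring,
      mul_rpow (by positivity) (by positivity), hβ]
    ring_nf
  have hsq : exp (-β) = exp (-r * (p / 2) ^ α) ^ 2 := by rw [← exp_nat_mul, hβ]; ring_nf
  have hC : (2 : ℝ) ^ α / (2 * α ^ 2 * r * p ^ α) = 1 / (α ^ 2 * β) := by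
    rw [hβ, div_rpow hp0 zero_le_two]; field_simp
  have hsum := tsum_exp_neg_mul_two_mul_add_one_rpow_le hα0.le hα1 hαβ
  simp only [hterm, hC]
  constructor
  · rw [← sqrt_sq (exp_pos _).le, ← sqrt_mul (sq_nonneg _), ← hsq]
    apply sqrt_le_sqrt
    calc 2 * ∑' m : ℕ, exp (-β * (2 * m + 1) ^ α) ≤ 2 * (exp (-β) * (1 + 1 / (2 * α ^ 2 * β))) := by
          gcongr
      _ = exp (-β) * (2 + 1 / (α ^ 2 * β)) := by field_simp
  · gcongr
    nlinarith
end

section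
/- Let v: ℝ → (0,∞) be even, nondecreasing, submultiplicative, and satisfy Σ_{l∈ℤ} v(l)^{-2} < ∞. Let f: ℝ → ℂ be continuous with ‖f‖_{W} := (Σ_{l∈ℤ} sup_{x∈[0,1]} |f(x+l)|² v(l)²)^{1/2} < ∞. Then for every p ≥ 1, ( ∫_{-p/2}^{p/2} |Σ_{l≠0} f(x + pl)|² dx )^{1/2} ≤ v(1) · Φ_v(p) · ‖f‖_{W}, where Φ_v(p) = (2 Σ_{m=0}^∞ v(pm + p/2)^{-2})^{1/2}. -/
/-!
Write `‖f(y)‖ = (‖f(y)‖ v(y)) · v(y)⁻¹`. Submultiplicativity and monotonicity of `v` give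
`‖f(y)‖ v(y) ≤ v(1) · locSup f ⌊y⌋ · v(⌊y⌋)`, and for `|x| ≤ p/2`, `l ≠ 0` one has
`|x + pl| ≥ p(|l| - 1) + p/2`, so weighted Cauchy–Schwarz bounds `‖∑_{l ≠ 0} f(x + pl)‖²` by
`v(1)² Φ_v(p)² ∑_l (locSup f ⌊x + pl⌋ · v(⌊x + pl⌋))²`. As `p ≥ 1`, the points `x + pl` lie in
distinct unit cells, and integrating over a period of length `p` visits each cell at most once,
which leaves `‖f‖_W²`.
-/

open MeasureTheory

/-- Local sup of |f| on the unit interval [l, l+1]. -/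
noncomputable def locSup (f : ℝ → ℂ) (l : ℤ) : ℝ :=
  ⨆ x ∈ Set.Icc (0:ℝ) 1, ‖f (x + (l : ℝ))‖

open Set Function
open scoped ENNReal

theorem norm_tsum_sq_le_tsum_inv_sq_mul_tsum_sq {ι E : Type*} [NormedAddCommGroup E]
    {u : ι → E} {w : ι → ℝ} (hw : ∀ i, 0 < w i) (hw_sum : Summable fun i => (w i ^ 2)⁻¹)
    (hu_sum : Summable fun i => ‖u i‖ ^ 2 * w i ^ 2) :
    ‖∑' i, u i‖ ^ 2 ≤ (∑' i, (w i ^ 2)⁻¹) * ∑' i, ‖u i‖ ^ 2 * w i ^ 2 := by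
  have hnorm : (fun i => ‖u i‖) = fun i => (w i)⁻¹ * (‖u i‖ * w i) := by
    funext i; field_simp [(hw i).ne']
  obtain ⟨hsum, hle⟩ := Real.summable_and_inner_le_Lp_mul_Lq_tsum_of_nonneg .two_two
    (fun i => (inv_pos.2 (hw i)).le) (fun i => mul_nonneg (norm_nonneg (u i)) (hw i).le)
    (by simpa [Real.rpow_two, inv_pow] using hw_sum)
    (by simpa [Real.rpow_two, mul_pow] using hu_sum)
  rw [← hnorm] at hsum hle
  simp only [Real.rpow_two, inv_pow, mul_pow, ← Real.sqrt_eq_rpow] at hle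
  calc ‖∑' i, u i‖ ^ 2 ≤ (∑' i, ‖u i‖) ^ 2 := by
        gcongr; exact norm_tsum_le_tsum_norm hsum
    _ ≤ _ := by
        refine (pow_le_pow_left₀ (by positivity) hle 2).trans_eq ?_
        rw [mul_pow, Real.sq_sqrt (by positivity), Real.sq_sqrt (by positivity)]

theorem HasSum.subtype_ne_zero_of_add_one_of_neg_add_one {M : Type*} [AddCommMonoid M]
    [TopologicalSpace M] [ContinuousAdd M] {f : ℤ → M} {a b : M}
    (h₁ : HasSum (fun n : ℕ => f (n + 1)) a) (h₂ : HasSum (fun n : ℕ => f (-(n + 1))) b) :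
    HasSum (fun l : {l : ℤ // l ≠ 0} => f l) (a + b) := by
  have hmem₁ (n : ℕ) : ((n : ℤ) + 1) ∈ {l : ℤ | l ≠ 0} := by change _ ≠ _; omega
  have hmem₂ (n : ℕ) : -((n : ℤ) + 1) ∈ {l : ℤ | l ≠ 0} := by change _ ≠ _; omega
  have h := HasSum.of_add_one_of_neg_add_one (f := {l : ℤ | l ≠ 0}.indicator f)
    (by simpa only [indicator_of_mem (hmem₁ _)] using h₁)
    (by simpa only [indicator_of_mem (hmem₂ _)] using h₂)
  rw [indicator_of_notMem (by simp), add_zero] at h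
  exact hasSum_subtype_iff_indicator.2 h

theorem Int.floor_add_mul_injective {p : ℝ} (hp : 1 ≤ p) (x : ℝ) :
    Injective fun l : ℤ => ⌊x + p * l⌋ := by
  intro l l' h
  have hlt := Int.abs_sub_lt_one_of_floor_eq_floor h
  rw [add_sub_add_left_eq_sub, ← mul_sub, abs_mul, abs_of_pos (by linarith)] at hlt
  have hdiff : |((l - l' : ℤ) : ℝ)| < 1 := by push_cast; nlinarith [abs_nonneg ((l : ℝ) - l')]
  rwa [← Int.cast_abs, ← Int.cast_one, Int.cast_lt, Int.abs_lt_one_iff, sub_eq_zero] at hdiff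

theorem lintegral_comp_floor (F : ℤ → ℝ≥0∞) : ∫⁻ y : ℝ, F ⌊y⌋ = ∑' k, F k := by
  rw [← setLIntegral_univ, ← iUnion_Ico_intCast,
    lintegral_iUnion (fun k => measurableSet_Ico) (pairwise_disjoint_Ico_intCast ℝ)]
  refine tsum_congr fun k => ?_
  rw [setLIntegral_congr_fun measurableSet_Ico (g := fun _ => F k)
    (fun y hy => by rw [Int.floor_eq_iff.2 hy]), setLIntegral_const, Real.volume_Ico]
  simp

theorem lintegral_Ioc_tsum_add_mul_le {p : ℝ} {G : ℝ → ℝ≥0∞} (hG : Measurable G) (t : ℝ) :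
    ∫⁻ x in Ioc t (t + p), ∑' l : ℤ, G (x + p * l) ≤ ∫⁻ y, G y := by
  have hdisj : Pairwise (Disjoint on fun l : ℤ => Ioc (t + p * l) (t + p + p * l)) := by
    convert pairwise_disjoint_Ioc_add_zsmul t p using 3 with l
    rw [zsmul_eq_mul, zsmul_eq_mul, Int.cast_add, Int.cast_one]
    congr 1 <;> ring
  calc ∫⁻ x in Ioc t (t + p), ∑' l : ℤ, G (x + p * l)
      = ∑' l : ℤ, ∫⁻ x in Ioc t (t + p), G (x + p * l) :=
        lintegral_tsum fun l => (hG.comp (measurable_add_const _)).aemeasurable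
    _ = ∑' l : ℤ, ∫⁻ y in Ioc (t + p * l) (t + p + p * l), G y := by
        refine tsum_congr fun l => ?_
        rw [(measurePreserving_add_right volume (p * l)).setLIntegral_comp_emb
          (measurableEmbedding_addRight _), image_add_const_Ioc]
    _ = ∫⁻ y in ⋃ l : ℤ, Ioc (t + p * l) (t + p + p * l), G y :=
        (lintegral_iUnion (fun l => measurableSet_Ioc) hdisj _).symm
    _ ≤ ∫⁻ y, G y := setLIntegral_le_lintegral _ _

theorem integral_le_of_lintegral_ofReal_le {α : Type*} [MeasurableSpace α] {μ : Measure α}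
    {g : α → ℝ} {C : ℝ} (hg : 0 ≤ᵐ[μ] g) (hC : 0 ≤ C)
    (h : ∫⁻ x, ENNReal.ofReal (g x) ∂μ ≤ ENNReal.ofReal C) : ∫ x, g x ∂μ ≤ C := by
  by_cases hi : Integrable g μ
  · rwa [← ENNReal.ofReal_le_ofReal_iff hC, ofReal_integral_eq_lintegral_ofReal hi hg]
  · rwa [integral_undef hi]

section weight

variable {v : ℝ → ℝ}

theorem inv_sq_le_inv_sq_of_abs_le (hpos : ∀ x, 0 < v x) (hmono : ∀ x y, |x| ≤ |y| → v x ≤ v y)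
    {x y : ℝ} (h : |x| ≤ |y|) : (v y ^ 2)⁻¹ ≤ (v x ^ 2)⁻¹ :=
  inv_anti₀ (pow_pos (hpos x) 2) (pow_le_pow_left₀ (hpos x).le (hmono x y h) 2)

theorem le_apply_floor_mul_apply_one (hpos : ∀ x, 0 < v x)
    (hmono : ∀ x y, |x| ≤ |y| → v x ≤ v y) (hsub : ∀ x y, v (x + y) ≤ v x * v y) (y : ℝ) :
    v y ≤ v ⌊y⌋ * v 1 := by
  have hfract : |Int.fract y| ≤ |1| := by
    rw [abs_of_nonneg (Int.fract_nonneg y), abs_one]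
    exact (Int.fract_lt_one y).le
  calc v y = v (⌊y⌋ + Int.fract y) := by rw [Int.floor_add_fract]
    _ ≤ v ⌊y⌋ * v (Int.fract y) := hsub _ _
    _ ≤ v ⌊y⌋ * v 1 := mul_le_mul_of_nonneg_left (hmono _ _ hfract) (hpos _).le

theorem summable_inv_sq_mul_add_half (hpos : ∀ x, 0 < v x)
    (hmono : ∀ x y, |x| ≤ |y| → v x ≤ v y) (hvsum : Summable fun l : ℤ => (v l ^ 2)⁻¹)
    {p : ℝ} (hp : 1 ≤ p) : Summable fun m : ℕ => (v (p * m + p / 2) ^ 2)⁻¹ := by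
  refine (hvsum.comp_injective Nat.cast_injective).of_nonneg_of_le (fun m => by positivity)
    fun m => inv_sq_le_inv_sq_of_abs_le hpos hmono ?_
  have hm : (0 : ℝ) ≤ m := m.cast_nonneg
  rw [Int.cast_natCast, abs_of_nonneg hm, abs_of_nonneg (by positivity)]
  nlinarith

theorem summable_and_tsum_inv_sq_add_mul_le (hpos : ∀ x, 0 < v x)
    (hmono : ∀ x y, |x| ≤ |y| → v x ≤ v y) {p x : ℝ} (hp : 0 ≤ p)
    (hg : Summable fun m : ℕ => (v (p * m + p / 2) ^ 2)⁻¹) (hx : |x| ≤ p / 2) :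
    (Summable fun l : {l : ℤ // l ≠ 0} => (v (x + p * ((l : ℤ) : ℝ)) ^ 2)⁻¹) ∧
      ∑' l : {l : ℤ // l ≠ 0}, (v (x + p * ((l : ℤ) : ℝ)) ^ 2)⁻¹ ≤
        2 * ∑' m : ℕ, (v (p * m + p / 2) ^ 2)⁻¹ := by
  obtain ⟨hx₁, hx₂⟩ := abs_le.1 hx
  have h₁ (n : ℕ) : (v (x + p * ((n + 1 : ℤ) : ℝ)) ^ 2)⁻¹ ≤ (v (p * n + p / 2) ^ 2)⁻¹ := by
    refine inv_sq_le_inv_sq_of_abs_le hpos hmono ?_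
    rw [abs_of_nonneg (by positivity)]
    push_cast
    exact le_trans (by linarith) (le_abs_self _)
  have h₂ (n : ℕ) : (v (x + p * ((-(n + 1) : ℤ) : ℝ)) ^ 2)⁻¹ ≤ (v (p * n + p / 2) ^ 2)⁻¹ := by
    refine inv_sq_le_inv_sq_of_abs_le hpos hmono ?_
    rw [abs_of_nonneg (by positivity)]
    push_cast
    exact le_trans (by linarith) (neg_le_abs _)
  have hs₁ := hg.of_nonneg_of_le (fun n => by positivity) h₁
  have hs₂ := hg.of_nonneg_of_le (fun n => by positivity) h₂
  have hs := HasSum.subtype_ne_zero_of_add_one_of_neg_add_one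
    (f := fun l : ℤ => (v (x + p * l) ^ 2)⁻¹) hs₁.hasSum hs₂.hasSum
  refine ⟨hs.summable, ?_⟩
  rw [hs.tsum_eq]
  linarith [hs₁.tsum_le_tsum h₁ hg, hs₂.tsum_le_tsum h₂ hg]

end weight

section locSup

variable {f : ℝ → ℂ}

theorem norm_le_locSup (hf : Continuous f) (k : ℤ) {t : ℝ} (ht : t ∈ Icc 0 1) :
    ‖f (t + k)‖ ≤ locSup f k := by
  have hbdd : BddAbove (⋃ x, range fun (_ : x ∈ Icc (0 : ℝ) 1) => ‖f (x + k)‖) := by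
    have hcont : Continuous fun x : ℝ => ‖f (x + k)‖ := by fun_prop
    refine ((isCompact_Icc (a := (0 : ℝ)) (b := 1)).image hcont).bddAbove.mono ?_
    rintro _ ⟨_, ⟨x, rfl⟩, ⟨hx, rfl⟩⟩
    exact ⟨x, hx, rfl⟩
  exact le_ciSup₂ (f := fun x (_ : x ∈ Icc (0 : ℝ) 1) => ‖f (x + k)‖) hbdd t ht

theorem norm_le_locSup_floor (hf : Continuous f) (y : ℝ) : ‖f y‖ ≤ locSup f ⌊y⌋ := by
  simpa only [Int.fract_add_floor] using
    norm_le_locSup hf ⌊y⌋ ⟨Int.fract_nonneg y, (Int.fract_lt_one y).le⟩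

theorem norm_sq_mul_sq_le_locSup_floor {v : ℝ → ℝ} (hpos : ∀ x, 0 < v x)
    (hmono : ∀ x y, |x| ≤ |y| → v x ≤ v y) (hsub : ∀ x y, v (x + y) ≤ v x * v y)
    (hf : Continuous f) (y : ℝ) :
    ‖f y‖ ^ 2 * v y ^ 2 ≤ v 1 ^ 2 * (locSup f ⌊y⌋ ^ 2 * v ⌊y⌋ ^ 2) := by
  have hf_le := norm_le_locSup_floor hf y
  have hprod : ‖f y‖ * v y ≤ locSup f ⌊y⌋ * (v ⌊y⌋ * v 1) :=
    mul_le_mul hf_le (le_apply_floor_mul_apply_one hpos hmono hsub y) (hpos y).le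
      ((norm_nonneg _).trans hf_le)
  calc ‖f y‖ ^ 2 * v y ^ 2 = (‖f y‖ * v y) ^ 2 := by ring
    _ ≤ (locSup f ⌊y⌋ * (v ⌊y⌋ * v 1)) ^ 2 :=
        pow_le_pow_left₀ (mul_nonneg (norm_nonneg _) (hpos y).le) hprod 2
    _ = v 1 ^ 2 * (locSup f ⌊y⌋ ^ 2 * v ⌊y⌋ ^ 2) := by ring

end locSup

theorem norm_tsum_ne_zero_sq_le {v : ℝ → ℝ} {f : ℝ → ℂ} (hpos : ∀ x, 0 < v x)
    (hmono : ∀ x y, |x| ≤ |y| → v x ≤ v y) (hsub : ∀ x y, v (x + y) ≤ v x * v y)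
    (hvsum : Summable fun l : ℤ => (v l ^ 2)⁻¹) (hf : Continuous f)
    (hW : Summable fun l : ℤ => locSup f l ^ 2 * v l ^ 2) {p x : ℝ} (hp : 1 ≤ p)
    (hx : |x| ≤ p / 2) :
    ‖∑' l : {l : ℤ // l ≠ 0}, f (x + p * ((l : ℤ) : ℝ))‖ ^ 2 ≤
      v 1 ^ 2 * (2 * ∑' m : ℕ, (v (p * m + p / 2) ^ 2)⁻¹) *
        ∑' l : ℤ, locSup f ⌊x + p * l⌋ ^ 2 * v ⌊x + p * l⌋ ^ 2 := by
  have hlattice : Summable fun l : ℤ => locSup f ⌊x + p * l⌋ ^ 2 * v ⌊x + p * l⌋ ^ 2 :=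
    hW.comp_injective (Int.floor_add_mul_injective hp x)
  obtain ⟨hw_sum, hw_le⟩ := summable_and_tsum_inv_sq_add_mul_le hpos hmono (by linarith)
    (summable_inv_sq_mul_add_half hpos hmono hvsum hp) hx
  have hpoint (l : ℤ) := norm_sq_mul_sq_le_locSup_floor hpos hmono hsub hf (x + p * l)
  have hlattice' := (hlattice.mul_left (v 1 ^ 2)).comp_injective
    (Subtype.val_injective (p := fun l : ℤ => l ≠ 0))
  have hu_sum : Summable fun l : {l : ℤ // l ≠ 0} =>
      ‖f (x + p * ((l : ℤ) : ℝ))‖ ^ 2 * v (x + p * ((l : ℤ) : ℝ)) ^ 2 :=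
    hlattice'.of_nonneg_of_le (fun l => by positivity) fun l => hpoint l
  have hu_le : ∑' l : {l : ℤ // l ≠ 0},
      ‖f (x + p * ((l : ℤ) : ℝ))‖ ^ 2 * v (x + p * ((l : ℤ) : ℝ)) ^ 2 ≤
        v 1 ^ 2 * ∑' l : ℤ, locSup f ⌊x + p * l⌋ ^ 2 * v ⌊x + p * l⌋ ^ 2 := by
    rw [← tsum_mul_left]
    refine (hu_sum.tsum_le_tsum (fun l : {l : ℤ // l ≠ 0} => hpoint l) hlattice').trans ?_
    exact (hlattice.mul_left _).tsum_subtype_le _ {l | l ≠ 0} fun l => by positivity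
  calc _ ≤ (∑' l : {l : ℤ // l ≠ 0}, (v (x + p * ((l : ℤ) : ℝ)) ^ 2)⁻¹) *
        ∑' l : {l : ℤ // l ≠ 0},
          ‖f (x + p * ((l : ℤ) : ℝ))‖ ^ 2 * v (x + p * ((l : ℤ) : ℝ)) ^ 2 :=
        norm_tsum_sq_le_tsum_inv_sq_mul_tsum_sq (fun l => hpos _) hw_sum hu_sum
    _ ≤ (2 * ∑' m : ℕ, (v (p * m + p / 2) ^ 2)⁻¹) *
        (v 1 ^ 2 * ∑' l : ℤ, locSup f ⌊x + p * l⌋ ^ 2 * v ⌊x + p * l⌋ ^ 2) :=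
        mul_le_mul hw_le hu_le (by positivity)
          ((tsum_nonneg fun _ => by positivity).trans hw_le)
    _ = _ := by ring

theorem integral_norm_tsum_ne_zero_sq_le {v : ℝ → ℝ} {f : ℝ → ℂ} (hpos : ∀ x, 0 < v x)
    (hmono : ∀ x y, |x| ≤ |y| → v x ≤ v y) (hsub : ∀ x y, v (x + y) ≤ v x * v y)
    (hvsum : Summable fun l : ℤ => (v l ^ 2)⁻¹) (hf : Continuous f)
    (hW : Summable fun l : ℤ => locSup f l ^ 2 * v l ^ 2) {p : ℝ} (hp : 1 ≤ p) :
    ∫ x in Icc (-(p / 2)) (p / 2), ‖∑' l : {l : ℤ // l ≠ 0}, f (x + p * ((l : ℤ) : ℝ))‖ ^ 2 ≤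
      v 1 ^ 2 * (2 * ∑' m : ℕ, (v (p * m + p / 2) ^ 2)⁻¹) *
        ∑' l : ℤ, locSup f l ^ 2 * v l ^ 2 := by
  set F : ℤ → ℝ := fun k => locSup f k ^ 2 * v k ^ 2
  set C := v 1 ^ 2 * (2 * ∑' m : ℕ, (v (p * m + p / 2) ^ 2)⁻¹)
  have hF (k : ℤ) : 0 ≤ F k := by positivity
  have hC : 0 ≤ C := by positivity
  refine integral_le_of_lintegral_ofReal_le (ae_of_all _ fun x => sq_nonneg _)
    (mul_nonneg hC (tsum_nonneg hF)) ?_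
  calc _ ≤ ∫⁻ x in Icc (-(p / 2)) (p / 2),
        ENNReal.ofReal C * ∑' l : ℤ, ENNReal.ofReal (F ⌊x + p * l⌋) := by
        refine setLIntegral_mono' measurableSet_Icc fun x hx => ?_
        rw [← ENNReal.ofReal_tsum_of_nonneg (fun l => hF _)
          (hW.comp_injective (Int.floor_add_mul_injective hp x)), ← ENNReal.ofReal_mul hC]
        exact ENNReal.ofReal_le_ofReal
          (norm_tsum_ne_zero_sq_le hpos hmono hsub hvsum hf hW hp (abs_le.2 hx))
    _ = ENNReal.ofReal C *
        ∫⁻ x in Ioc (-(p / 2)) (-(p / 2) + p), ∑' l : ℤ, ENNReal.ofReal (F ⌊x + p * l⌋) := by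
        rw [lintegral_const_mul' _ _ ENNReal.ofReal_ne_top, show -(p / 2) + p = p / 2 by ring,
          Measure.restrict_congr_set Ioc_ae_eq_Icc]
    _ ≤ ENNReal.ofReal C * ∫⁻ y : ℝ, ENNReal.ofReal (F ⌊y⌋) :=
        mul_le_mul_right (lintegral_Ioc_tsum_add_mul_le
          ((measurable_of_countable fun k => ENNReal.ofReal (F k)).comp Int.measurable_floor) _) _
    _ = ENNReal.ofReal (C * ∑' k, F k) := by
        rw [lintegral_comp_floor fun k => ENNReal.ofReal (F k),
          ← ENNReal.ofReal_tsum_of_nonneg hF hW, ENNReal.ofReal_mul hC]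

theorem periodization_L2_bound_general (v : ℝ → ℝ) (f : ℝ → ℂ)
    (hpos : ∀ x, 0 < v x)
    (hmono : ∀ x y, |x| ≤ |y| → v x ≤ v y)
    (hsub : ∀ x y, v (x + y) ≤ v x * v y)
    (hvsum : Summable fun l : ℤ => (v (l : ℝ) ^ 2)⁻¹)
    (hf : Continuous f)
    (hW : Summable fun l : ℤ => locSup f l ^ 2 * v (l : ℝ) ^ 2)
    (p : ℝ) (hp : 1 ≤ p) :
    Real.sqrt (∫ x in Set.Icc (-(p/2)) (p/2),
        ‖∑' l : {l : ℤ // l ≠ 0}, f (x + p * ((l : ℤ) : ℝ))‖ ^ 2) ≤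
      v 1 * Real.sqrt (2 * ∑' m : ℕ, (v (p * (m : ℝ) + p/2) ^ 2)⁻¹) *
        Real.sqrt (∑' l : ℤ, locSup f l ^ 2 * v (l : ℝ) ^ 2) := by
  have hΦ : 0 ≤ 2 * ∑' m : ℕ, (v (p * (m : ℝ) + p/2) ^ 2)⁻¹ := by positivity
  have hS : 0 ≤ ∑' l : ℤ, locSup f l ^ 2 * v (l : ℝ) ^ 2 := by positivity
  rw [Real.sqrt_le_iff, mul_pow, mul_pow, Real.sq_sqrt hΦ, Real.sq_sqrt hS]
  exact ⟨by positivity [(hpos 1).le],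
    integral_norm_tsum_ne_zero_sq_le hpos hmono hsub hvsum hf hW hp⟩

/-- For a weight v that is even, nondecreasing, submultiplicative, with
Σ_l v(l)^{-2} < ∞, and a continuous f with finite amalgam norm
‖f‖_W = (Σ_l sup_{x∈[0,1]}|f(x+l)|² v(l)²)^{1/2}, one has, for p ≥ 1,
‖f − 𝒫_p f‖_{L²(−p/2,p/2)} ≤ v(1)·Φ_v(p)·‖f‖_W with
Φ_v(p) = (2 Σ_{m=0}^∞ v(pm+p/2)^{-2})^{1/2}. -/
theorem periodization_L2_bound (v : ℝ → ℝ) (f : ℝ → ℂ)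
    (hpos : ∀ x, 0 < v x)
    (heven : ∀ x, v (-x) = v x)
    (hmono : ∀ x y, |x| ≤ |y| → v x ≤ v y)
    (hsub : ∀ x y, v (x + y) ≤ v x * v y)
    (hvsum : Summable fun l : ℤ => (v (l : ℝ) ^ 2)⁻¹)
    (hf : Continuous f)
    (hW : Summable fun l : ℤ => locSup f l ^ 2 * v (l : ℝ) ^ 2)
    (p : ℝ) (hp : 1 ≤ p) :
    Real.sqrt (∫ x in Set.Icc (-(p/2)) (p/2),
        ‖∑' l : {l : ℤ // l ≠ 0}, f (x + p * ((l : ℤ) : ℝ))‖ ^ 2) ≤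
      v 1 * Real.sqrt (2 * ∑' m : ℕ, (v (p * (m : ℝ) + p/2) ^ 2)⁻¹) *
        Real.sqrt (∑' l : ℤ, locSup f l ^ 2 * v (l : ℝ) ^ 2) :=
  periodization_L2_bound_general v f hpos hmono hsub hvsum hf hW p hp
end
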